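/- arXiv:1411.7838 — 7 statements merged into one kernel-verified Lean document; each statement's English description precedes it below -/
import Mathlib

section
/- Let G = (V, E, w) be an influence graph, X ⊆ V, v ∈ X, and u ∈ V. If every directed path in G from v to u contains a node of X ∖ {v}, then p(u | X) = p(u | X ∖ {v}). (The activation probability of u depends only on those effectors that are connected to u by a directed path containing no other effector.) -/
/-- The set of nodes reachable from some node of `X` by a directed path
using only arcs of `S`. -/
def reach {V : Type*} (S : Set (V × V)) (X : Set V) : Set V :=
  {v | ∃ x ∈ X, Relation.ReflTransGen (fun a b : V => (a, b) ∈ S) x v}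

/-- The live-arc probability of the arc subset `S ⊆ E`:
`P(S) = (∏_{e ∈ S} w(e)) · (∏_{e ∈ E∖S} (1 − w(e)))`. -/
def liveP {V : Type*} [DecidableEq V] (w : V × V → ℚ) (E S : Finset (V × V)) : ℚ :=
  (∏ e ∈ S, w e) * ∏ e ∈ E \ S, (1 - w e)

open Classical in
/-- The activation probability `p(v|X)` of node `v` for effector set `X`. -/
noncomputable def actProb {V : Type*} [Fintype V] [DecidableEq V]
    (w : V × V → ℚ) (E : Finset (V × V)) (X : Set V) (v : V) : ℚ :=
  ∑ S ∈ E.powerset.filter (fun T : Finset (V × V) => v ∈ reach (↑T : Set (V × V)) X),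
    liveP w E S

/-!
For every live-arc set `S ⊆ E` the events "`u` is reachable from `X`" and "`u` is reachable from
`X ∖ {v}`" coincide: a live path from `v` to `u` is a path of `G`, so it passes through some
`z ∈ X ∖ {v}`, and its part from `z` on is a live path from `X ∖ {v}` to `u`. Hence both
activation probabilities sum `P(S)` over the same sets `S`.
-/

section

variable {V : Type*}

theorem mem_reach_diff_singleton_iff {S : Set (V × V)} {X : Set V} {v u : V}
    (hpaths : ∀ l : List V, List.IsChain (fun a b : V => (a, b) ∈ S) (v :: l) →
      (v :: l).getLast (List.cons_ne_nil v l) = u → ∃ z ∈ X \ {v}, z ∈ v :: l) :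
    u ∈ reach S (X \ {v}) ↔ u ∈ reach S X := by
  refine ⟨fun ⟨x, hx, hxu⟩ => ⟨x, hx.1, hxu⟩, fun ⟨x, hxX, hxu⟩ => ?_⟩
  by_cases hxv : x = v
  · subst hxv
    obtain ⟨l, hchain, hlast⟩ := List.exists_isChain_cons_of_relationReflTransGen hxu
    obtain ⟨z, hz, hzl⟩ := hpaths l hchain hlast
    exact ⟨z, hz, hchain.backwards_cons_induction (Relation.ReflTransGen _ · u) l hlast
      (fun _ _ hab hbu => hbu.head hab) .refl z hzl⟩
  · exact ⟨x, ⟨hxX, hxv⟩, hxu⟩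

theorem actProb_congr_of_mem_reach_iff [Fintype V] [DecidableEq V] (w : V × V → ℚ)
    (E : Finset (V × V)) {X Y : Set V} {u : V}
    (h : ∀ S ⊆ E, u ∈ reach (↑S : Set (V × V)) X ↔ u ∈ reach (↑S : Set (V × V)) Y) :
    actProb w E X u = actProb w E Y u := by
  classical
  exact Finset.sum_congr (Finset.filter_congr fun S hS => h S (Finset.mem_powerset.mp hS))
    fun _ _ => rfl

end

/-- If every directed path from the effector `v ∈ X` to `u` contains
a node of `X ∖ {v}`, then removing `v` from the effector set does not change the
activation probability of `u`. -/
theorem actProb_erase_of_paths_blocked {V : Type*} [Fintype V] [DecidableEq V]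
    (E : Finset (V × V)) (w : V × V → ℚ)
    (X : Set V) (v : V) (u : V)
    (hpaths : ∀ l : List V,
      List.Chain (fun a b : V => (a, b) ∈ (↑E : Set (V × V))) v l →
      (v :: l).getLast (by simp) = u → ∃ z ∈ X \ {v}, z ∈ v :: l) :
    actProb w E X u = actProb w E (X \ {v}) u :=
  actProb_congr_of_mem_reach_iff w E fun _ hS =>
    (mem_reach_diff_singleton_iff fun l hl => hpaths l (hl.imp fun _ _ hab => hS hab)).symm
end

section
/- Let G = (V, E) be a finite directed graph and let A, X ⊆ V. Set X' := A ∩ reach(X). Then |X'| ≤ |A| and the symmetric difference satisfies |A Δ reach(X')| ≤ |A Δ reach(X)|. (In the deterministic case, replacing an effector set by the target nodes it activates never increases the cost; hence at most |A| effectors are needed.) -/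
theorem Set.symmDiff_subset_symmDiff_of_inter_subset_of_subset {α : Type*} {A R R' : Set α}
    (hAR : A ∩ R ⊆ R') (hR' : R' ⊆ R) : symmDiff A R' ⊆ symmDiff A R := by
  rintro v (⟨hvA, hvR'⟩ | ⟨hvR', hvA⟩)
  · exact Or.inl ⟨hvA, fun hvR => hvR' (hAR ⟨hvA, hvR⟩)⟩
  · exact Or.inr ⟨hR' hvR', hvA⟩

section Reach

variable {V : Type*} (S : Set (V × V))

theorem subset_reach (X : Set V) : X ⊆ reach S X :=
  fun x hx => ⟨x, hx, .refl⟩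

theorem reach_mono : Monotone (reach S) :=
  fun _ _ hXY _ ⟨x, hx, hxv⟩ => ⟨x, hXY hx, hxv⟩

theorem reach_reach (X : Set V) : reach S (reach S X) = reach S X := by
  refine (subset_reach S _).antisymm' ?_
  rintro v ⟨y, ⟨x, hx, hxy⟩, hyv⟩
  exact ⟨x, hx, hxy.trans hyv⟩

theorem reach_inter_reach_subset (A X : Set V) : reach S (A ∩ reach S X) ⊆ reach S X :=
  (reach_mono S Set.inter_subset_right).trans (reach_reach S X).subset

end Reach

/-- Replacing an effector set `X` by `X' := A ∩ reach(X)` never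
increases the deterministic cost `|A Δ reach(·)|`, and `|X'| ≤ |A|`. -/
theorem target_effectors_suffice {V : Type*} [Fintype V]
    (E : Set (V × V)) (A X : Set V) :
    (A ∩ reach E X).ncard ≤ A.ncard ∧
    ((A \ reach E (A ∩ reach E X)) ∪ (reach E (A ∩ reach E X) \ A)).ncard ≤
      ((A \ reach E X) ∪ (reach E X \ A)).ncard :=
  ⟨Set.ncard_le_ncard Set.inter_subset_left,
    Set.ncard_le_ncard <| Set.symmDiff_subset_symmDiff_of_inter_subset_of_subset
      (subset_reach E _) (reach_inter_reach_subset E A X)⟩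
end

section
/- Let G = (V, E, w) be an influence graph and let E_det := { e ∈ E : w(e) = 1 } be its set of deterministic arcs. Then for every X ⊆ V and every v ∈ V: (i) p(v|X) = 1 if and only if v ∈ reach_{E_det}(X), and (ii) p(v|X) > 0 if and only if v ∈ reach_E(X). -/
/-! The live-arc measure is a probability measure on the subsets of `E` whose support consists
exactly of the subsets containing every deterministic arc. Reachability is monotone in the arc
set, so the event `v ∈ reach S X` has probability one iff it holds for the smallest such subset,
the deterministic arcs, and positive probability iff it holds for the largest one, `E` itself. -/

theorem Finset.sum_filter_eq_sum_iff_of_nonneg {ι M : Type*} [AddCommMonoid M] [PartialOrder M]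
    [IsOrderedCancelAddMonoid M] {s : Finset ι} {f : ι → M} (p : ι → Prop) [DecidablePred p]
    (hf : ∀ i ∈ s, 0 ≤ f i) :
    ∑ i ∈ s.filter p, f i = ∑ i ∈ s, f i ↔ ∀ i ∈ s, f i ≠ 0 → p i := by
  rw [← Finset.sum_filter_add_sum_filter_not s p f, left_eq_add,
    Finset.sum_eq_zero_iff_of_nonneg fun i hi => hf i (Finset.mem_filter.mp hi).1]
  simp only [Finset.mem_filter, and_imp]
  exact forall₂_congr fun i _ => not_imp_comm

lemma reach_mono_s6 {V : Type*} {S T : Set (V × V)} (h : S ⊆ T) (X : Set V) :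
    reach S X ⊆ reach T X := by
  rintro v ⟨x, hx, hxv⟩
  exact ⟨x, hx, Relation.ReflTransGen.mono (fun _ _ hab => h hab) _ _ hxv⟩

section liveP

variable {V : Type*} [DecidableEq V]

lemma sum_powerset_liveP (w : V × V → ℚ) (E : Finset (V × V)) :
    ∑ S ∈ E.powerset, liveP w E S = 1 := by
  simpa [liveP] using (Finset.prod_add w (fun e => 1 - w e) E).symm

variable {w : V × V → ℚ} {E S : Finset (V × V)}

lemma liveP_nonneg (hw : ∀ e ∈ E, 0 < w e ∧ w e ≤ 1) (hS : S ⊆ E) : 0 ≤ liveP w E S :=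
  mul_nonneg (Finset.prod_nonneg fun e he => (hw e (hS he)).1.le)
    (Finset.prod_nonneg fun e he => sub_nonneg.mpr (hw e (Finset.mem_sdiff.mp he).1).2)

lemma liveP_pos_iff (hw : ∀ e ∈ E, 0 < w e ∧ w e ≤ 1) (hS : S ⊆ E) :
    0 < liveP w E S ↔ E.filter (fun e => w e = 1) ⊆ S := by
  constructor
  · intro hpos e he
    obtain ⟨heE, hwe⟩ := Finset.mem_filter.mp he
    by_contra heS
    have hzero : liveP w E S = 0 :=
      mul_eq_zero_of_right _ (Finset.prod_eq_zero (Finset.mem_sdiff.mpr ⟨heE, heS⟩) (by simp [hwe]))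
    exact hpos.ne' hzero
  · intro hdet
    refine mul_pos (Finset.prod_pos fun e he => (hw e (hS he)).1) (Finset.prod_pos fun e he => ?_)
    obtain ⟨heE, heS⟩ := Finset.mem_sdiff.mp he
    have hwe : w e ≠ 1 := fun h => heS (hdet (Finset.mem_filter.mpr ⟨heE, h⟩))
    exact sub_pos.mpr ((hw e heE).2.lt_of_ne hwe)

end liveP

section actProb

variable {V : Type*} [Fintype V] [DecidableEq V] {E : Finset (V × V)} {w : V × V → ℚ}

lemma actProb_eq_one_iff (hw : ∀ e ∈ E, 0 < w e ∧ w e ≤ 1) (X : Set V) (v : V) :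
    actProb w E X v = 1 ↔ v ∈ reach (↑(E.filter (fun e => w e = 1)) : Set (V × V)) X := by
  classical
  rw [actProb]
  conv_lhs => rw [← sum_powerset_liveP w E]
  rw [Finset.sum_filter_eq_sum_iff_of_nonneg _
    fun S hS => liveP_nonneg hw (Finset.mem_powerset.mp hS)]
  constructor
  · intro h
    have hdet : E.filter (fun e => w e = 1) ⊆ E := Finset.filter_subset _ _
    exact h _ (Finset.mem_powerset.mpr hdet) ((liveP_pos_iff hw hdet).mpr le_rfl).ne'
  · intro hv S hS hne
    have hSE := Finset.mem_powerset.mp hS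
    have hdet := (liveP_pos_iff hw hSE).mp ((liveP_nonneg hw hSE).lt_of_ne' hne)
    exact reach_mono_s6 (Finset.coe_subset.mpr hdet) X hv

lemma actProb_pos_iff (hw : ∀ e ∈ E, 0 < w e ∧ w e ≤ 1) (X : Set V) (v : V) :
    0 < actProb w E X v ↔ v ∈ reach (↑E : Set (V × V)) X := by
  classical
  rw [actProb, Finset.sum_pos_iff_of_nonneg
    fun S hS => liveP_nonneg hw (Finset.mem_powerset.mp (Finset.mem_filter.mp hS).1)]
  simp only [Finset.mem_filter, Finset.mem_powerset]
  constructor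
  · rintro ⟨S, ⟨hSE, hv⟩, -⟩
    exact reach_mono_s6 (Finset.coe_subset.mpr hSE) X hv
  · intro hv
    have hdet : E.filter (fun e => w e = 1) ⊆ E := Finset.filter_subset _ _
    exact ⟨E, ⟨subset_rfl, hv⟩, (liveP_pos_iff hw subset_rfl).mpr hdet⟩

end actProb

/-- `p(v|X) = 1` iff `v` is reachable from `X` via deterministic arcs,
and `p(v|X) > 0` iff `v` is reachable from `X` via arbitrary arcs. -/
theorem actProb_eq_one_iff_and_pos_iff {V : Type*} [Fintype V] [DecidableEq V]
    (E : Finset (V × V)) (w : V × V → ℚ)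
    (hw : ∀ e ∈ E, 0 < w e ∧ w e ≤ 1)
    (X : Set V) (v : V) :
    (actProb w E X v = 1 ↔
      v ∈ reach (↑(E.filter (fun e => w e = 1)) : Set (V × V)) X) ∧
    (0 < actProb w E X v ↔ v ∈ reach (↑E : Set (V × V)) X) :=
  ⟨actProb_eq_one_iff hw X v, actProb_pos_iff hw X v⟩
end

section
/- Let G = (V, E) be a finite directed graph with distinct nodes s, t ∈ V, and let E_st ⊆ E be the set of arcs that lie on some simple directed path from s to t. For an arc set F ⊆ E, say F connects s to t if t ∈ reach_F({s}). Then the number of arc subsets F ⊆ E connecting s to t equals the number of arc subsets F ⊆ E_st connecting s to t, multiplied by 2^{|E ∖ E_st|}. In symbols: |{ F ⊆ E : t ∈ reach_F({s}) }| = |{ F ⊆ E_st : t ∈ reach_F({s}) }| · 2^{|E ∖ E_st|}. -/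
open Classical in
/-- The arcs of `E` that lie on some simple directed path from `s` to `t`. -/
noncomputable def simplePathArcs {V : Type*} [DecidableEq V]
    (E : Finset (V × V)) (s t : V) : Finset (V × V) :=
  E.filter (fun e => ∃ l : List V, l.Nodup ∧
    List.Chain' (fun a b : V => (a, b) ∈ E) l ∧
    l.head? = some s ∧ l.getLast? = some t ∧ e ∈ l.zip l.tail)

/-! Any walk from `s` to `t` can be shortcut to a simple path, all of whose arcs lie in `E_st`.
Hence `F ⊆ E` connects `s` to `t` iff `F ∩ E_st` does, so `F ↦ (F ∩ E_st, F \ E_st)` is a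
bijection from the connecting subsets of `E` onto the connecting subsets of `E_st` times all
subsets of `E \ E_st`. -/

theorem List.isChain_iff_forall_mem_zip_tail {α : Type*} {R : α → α → Prop} {l : List α} :
    l.IsChain R ↔ ∀ p ∈ l.zip l.tail, R p.1 p.2 := by
  induction l using List.twoStepInduction <;> simp_all

theorem Relation.ReflTransGen.exists_nodup_isChain_cons {α : Type*} {r : α → α → Prop}
    {a b : α} (h : Relation.ReflTransGen r a b) :
    ∃ l : List α, (a :: l).Nodup ∧ (a :: l).IsChain r ∧
      (a :: l).getLast (List.cons_ne_nil _ _) = b := by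
  induction h using Relation.ReflTransGen.head_induction_on with
  | refl => exact ⟨[], by simp⟩
  | @head a c hac _ ih =>
    obtain ⟨l, hnd, hch, hlast⟩ := ih
    by_cases ha : a ∈ c :: l
    · -- `a` already lies on the path: drop the cycle through it
      obtain ⟨l₁, l₂, hsplit⟩ := List.append_of_mem ha
      have hsuf : a :: l₂ <:+ c :: l := hsplit ▸ List.suffix_append _ _
      refine ⟨l₂, hnd.sublist hsuf.sublist, hch.suffix hsuf, ?_⟩
      simp [← hlast, hsplit]
    · exact ⟨c :: l, List.nodup_cons.2 ⟨ha, hnd⟩, hch.cons_cons hac, by simpa using hlast⟩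

open Finset in
theorem Finset.card_filter_powerset_eq_mul_of_inter_iff {α : Type*} [DecidableEq α]
    {A E : Finset α} (hAE : A ⊆ E) (P : Finset α → Prop) [DecidablePred P]
    (hP : ∀ F ⊆ E, P (F ∩ A) ↔ P F) :
    #{F ∈ E.powerset | P F} = #{F ∈ A.powerset | P F} * 2 ^ #(E \ A) := by
  rw [← card_powerset, ← card_product]
  have union_inter {G H : Finset α} (hG : G ⊆ A) (hH : H ⊆ E \ A) : (G ∪ H) ∩ A = G := by
    grind
  have union_sdiff {G H : Finset α} (hG : G ⊆ A) (hH : H ⊆ E \ A) : (G ∪ H) \ A = H := by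
    grind
  refine card_bij' (fun F _ ↦ (F ∩ A, F \ A)) (fun p _ ↦ p.1 ∪ p.2) ?_ ?_ ?_ ?_
  · intro F hF
    simp only [mem_filter, mem_powerset, mem_product] at hF ⊢
    exact ⟨⟨inter_subset_right, (hP F hF.1).2 hF.2⟩, sdiff_subset_sdiff hF.1 subset_rfl⟩
  · rintro ⟨G, H⟩ hGH
    simp only [mem_filter, mem_powerset, mem_product] at hGH ⊢
    obtain ⟨⟨hG, hPG⟩, hH⟩ := hGH
    have hsub : G ∪ H ⊆ E := union_subset (hG.trans hAE) (hH.trans sdiff_subset)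
    exact ⟨hsub, (hP _ hsub).1 (by rwa [union_inter hG hH])⟩
  · exact fun F _ ↦ sup_inf_sdiff F A
  · rintro ⟨G, H⟩ hGH
    simp only [mem_filter, mem_powerset, mem_product] at hGH
    exact Prod.ext (union_inter hGH.1.1 hGH.2) (union_sdiff hGH.1.1 hGH.2)

theorem mem_reach_singleton_iff {V : Type*} {S : Set (V × V)} {s t : V} :
    t ∈ reach S {s} ↔ Relation.ReflTransGen (fun a b ↦ (a, b) ∈ S) s t := by
  simp [reach]

theorem mem_reach_inter_simplePathArcs_iff {V : Type*} [DecidableEq V] {E F : Finset (V × V)}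
    (hF : F ⊆ E) (s t : V) :
    t ∈ reach ↑(F ∩ simplePathArcs E s t) {s} ↔ t ∈ reach ↑F {s} := by
  classical
  simp only [mem_reach_singleton_iff]
  refine ⟨Relation.ReflTransGen.mono (fun _ _ ↦ Finset.mem_of_mem_inter_left) s t,
    fun h ↦ ?_⟩
  obtain ⟨l, hnd, hch, hlast⟩ := h.exists_nodup_isChain_cons
  refine List.relationReflTransGen_of_exists_isChain_cons l ?_ hlast
  have hchE : (s :: l).IsChain fun a b ↦ (a, b) ∈ E := hch.imp fun _ _ hab ↦ hF hab
  rw [List.isChain_iff_forall_mem_zip_tail] at hch ⊢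
  intro p hp
  refine Finset.mem_inter.2 ⟨hch p hp, Finset.mem_filter.2
    ⟨hF (hch p hp), s :: l, hnd, hchE, rfl, ?_, hp⟩⟩
  rw [List.getLast?_eq_some_getLast (List.cons_ne_nil _ _), hlast]

open Classical in
theorem st_connecting_subsets_count_general {V : Type*} [DecidableEq V]
    (E : Finset (V × V)) (s t : V) :
    (E.powerset.filter
      (fun F : Finset (V × V) => t ∈ reach (↑F : Set (V × V)) {s})).card =
    ((simplePathArcs E s t).powerset.filter
      (fun F : Finset (V × V) => t ∈ reach (↑F : Set (V × V)) {s})).card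
      * 2 ^ (E \ simplePathArcs E s t).card :=
  Finset.card_filter_powerset_eq_mul_of_inter_iff (Finset.filter_subset _ _) _
    fun _ hF ↦ mem_reach_inter_simplePathArcs_iff hF s t

open Classical in
/-- The number of arc subsets of `E` connecting `s` to `t` equals the
number of arc subsets of `E_st` connecting `s` to `t` times `2^{|E ∖ E_st|}`. -/
theorem st_connecting_subsets_count {V : Type*} [Fintype V] [DecidableEq V]
    (E : Finset (V × V)) (s t : V) (hst : s ≠ t) :
    (E.powerset.filter
      (fun F : Finset (V × V) => t ∈ reach (↑F : Set (V × V)) {s})).card =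
    ((simplePathArcs E s t).powerset.filter
      (fun F : Finset (V × V) => t ∈ reach (↑F : Set (V × V)) {s})).card
      * 2 ^ (E \ simplePathArcs E s t).card :=
  st_connecting_subsets_count_general E s t
end

section
/- Correctness of the Dominating Set reduction: Let H = (V, E) be a finite simple undirected graph and k ∈ ℕ. Construct the finite directed graph G whose node set is the disjoint union V ⊔ (V × {1,…,k+1}) and whose arcs are: for each v ∈ V and each i ∈ {1,…,k+1}, an arc from v to (v, i); and for each edge {u, v} ∈ E and each i ∈ {1,…,k+1}, an arc from u to (v, i) and an arc from v to (u, i). Let A := V × {1,…,k+1}. Then H has a dominating set of size at most k (a set D ⊆ V such that every vertex of V is in D or adjacent to a vertex of D) if and only if there exists a set X of nodes of G with |X| ≤ k and |A Δ reach(X)| ≤ k. -/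
/-- The arc set of the directed graph constructed in the Dominating Set reduction:
each initiator `u` points to all `k+1` copies of `u` and of every neighbor of `u`. -/
def domArcs {V : Type*} (H : SimpleGraph V) (k : ℕ) :
    Set ((V ⊕ V × Fin (k + 1)) × (V ⊕ V × Fin (k + 1))) :=
  {a | ∃ (u v : V) (i : Fin (k + 1)),
        (u = v ∨ H.Adj u v) ∧ a = (Sum.inl u, Sum.inr (v, i))}

open scoped symmDiff

theorem Relation.reflTransGen_iff_eq_or_of_not_two_step {α : Type*} {r : α → α → Prop}
    (hr : ∀ a b c, r a b → ¬ r b c) {a b : α} :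
    Relation.ReflTransGen r a b ↔ a = b ∨ r a b := by
  refine ⟨fun h => ?_, ?_⟩
  · induction h with
    | refl => exact Or.inl rfl
    | tail _ hbc ih =>
      rcases ih with rfl | hab
      · exact Or.inr hbc
      · exact (hr _ _ _ hab hbc).elim
  · rintro (rfl | hab)
    exacts [.refl, .single hab]

theorem mem_reach_iff_of_not_two_step {α : Type*} {S : Set (α × α)}
    (hS : ∀ a b c, (a, b) ∈ S → (b, c) ∉ S) {X : Set α} {b : α} :
    b ∈ reach S X ↔ b ∈ X ∨ ∃ a ∈ X, (a, b) ∈ S := by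
  simp only [reach, Set.mem_ofPred_eq, Relation.reflTransGen_iff_eq_or_of_not_two_step hS]
  constructor
  · rintro ⟨a, ha, rfl | hab⟩
    exacts [Or.inl ha, Or.inr ⟨a, ha, hab⟩]
  · rintro (hb | ⟨a, ha, hab⟩)
    exacts [⟨b, hb, Or.inl rfl⟩, ⟨a, ha, Or.inr hab⟩]

namespace SimpleGraph

variable {V : Type*} (H : SimpleGraph V)

def Dominates (D : Set V) (v : V) : Prop :=
  v ∈ D ∨ ∃ d ∈ D, H.Adj d v

theorem dominates_union_undominated (D : Set V) (v : V) :
    H.Dominates (D ∪ {w | ¬ H.Dominates D w}) v := by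
  by_cases hv : H.Dominates D v
  · rcases hv with hv | ⟨d, hd, hdv⟩
    exacts [Or.inl (Or.inl hv), Or.inr ⟨d, Or.inl hd, hdv⟩]
  · exact Or.inl (Or.inr hv)

end SimpleGraph

section DomArcs

variable {V : Type*} {H : SimpleGraph V} {k : ℕ} {X : Set (V ⊕ V × Fin (k + 1))}

theorem mem_domArcs_iff {a : V ⊕ V × Fin (k + 1)} {v : V} {i : Fin (k + 1)} :
    (a, Sum.inr (v, i)) ∈ domArcs H k ↔ ∃ u, a = Sum.inl u ∧ (u = v ∨ H.Adj u v) := by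
  simp only [domArcs, Set.mem_ofPred_eq, Prod.mk.injEq, Sum.inr.injEq]
  constructor
  · rintro ⟨u, _, _, huv, rfl, rfl, rfl⟩
    exact ⟨u, rfl, huv⟩
  · rintro ⟨u, rfl, huv⟩
    exact ⟨u, v, i, huv, rfl, rfl, rfl⟩

theorem inl_notMem_domArcs (a : V ⊕ V × Fin (k + 1)) (u : V) :
    (a, Sum.inl u) ∉ domArcs H k := by
  rintro ⟨_, _, _, _, h⟩
  exact Sum.inl_ne_inr (congrArg Prod.snd h)

theorem domArcs_not_two_step (a b c : V ⊕ V × Fin (k + 1)) :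
    (a, b) ∈ domArcs H k → (b, c) ∉ domArcs H k := by
  rintro ⟨_, _, _, _, hab⟩ ⟨u, _, _, _, hbc⟩
  cases congrArg Prod.snd hab
  exact Sum.inr_ne_inl (congrArg Prod.fst hbc)

theorem inl_mem_reach_domArcs_iff {u : V} :
    Sum.inl u ∈ reach (domArcs H k) X ↔ Sum.inl u ∈ X := by
  simp [mem_reach_iff_of_not_two_step domArcs_not_two_step, inl_notMem_domArcs]

theorem inr_mem_reach_domArcs_iff {v : V} {i : Fin (k + 1)} :
    Sum.inr (v, i) ∈ reach (domArcs H k) X ↔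
      Sum.inr (v, i) ∈ X ∨ H.Dominates (Sum.inl ⁻¹' X) v := by
  rw [mem_reach_iff_of_not_two_step domArcs_not_two_step]
  simp only [mem_domArcs_iff, SimpleGraph.Dominates, Set.mem_preimage]
  constructor
  · rintro (hX | ⟨_, hu, u, rfl, rfl | huv⟩)
    exacts [Or.inl hX, Or.inr (Or.inl hu), Or.inr (Or.inr ⟨u, hu, huv⟩)]
  · rintro (hX | hv | ⟨u, hu, huv⟩)
    exacts [Or.inl hX, Or.inr ⟨_, hv, v, rfl, Or.inl rfl⟩, Or.inr ⟨_, hu, u, rfl, Or.inr huv⟩]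

theorem reach_domArcs_image_inl {D : Set V} (hD : ∀ v, H.Dominates D v) :
    reach (domArcs H k) (Sum.inl '' D) = Sum.inl '' D ∪ Set.range Sum.inr := by
  ext (u | ⟨v, i⟩)
  · simp [inl_mem_reach_domArcs_iff]
  · simp [inr_mem_reach_domArcs_iff, Set.preimage_image_eq _ Sum.inl_injective, hD v]

theorem symmDiff_reach_domArcs_image_inl {D : Set V} (hD : ∀ v, H.Dominates D v) :
    Set.range Sum.inr ∆ reach (domArcs H k) (Sum.inl '' D) = Sum.inl '' D := by
  have hdisj : Disjoint (Sum.inl '' D) (Set.range (Sum.inr : V × Fin (k + 1) → _)) :=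
    Set.isCompl_range_inl_range_inr.disjoint.mono_left (Set.image_subset_range _ _)
  rw [reach_domArcs_image_inl hD, symmDiff_of_le Set.subset_union_right,
    Set.union_sdiff_right, hdisj.sdiff_eq_left]

theorem exists_inr_notMem [Finite V] (hX : X.ncard ≤ k) (v : V) :
    ∃ i : Fin (k + 1), Sum.inr (v, i) ∉ X := by
  have hinj : Function.Injective fun i : Fin (k + 1) => (Sum.inr (v, i) : V ⊕ V × Fin (k + 1)) :=
    fun i j hij => by simpa using hij
  have hlt : X.ncard <
      (Set.range fun i : Fin (k + 1) => (Sum.inr (v, i) : V ⊕ V × Fin (k + 1))).ncard := by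
    rw [Set.ncard_range_of_injective hinj, Nat.card_eq_fintype_card, Fintype.card_fin]
    omega
  obtain ⟨_, ⟨i, rfl⟩, hi⟩ := Set.exists_mem_notMem_of_ncard_lt_ncard hlt
  exact ⟨i, hi⟩

theorem ncard_add_ncard_undominated_le [Finite V] (hX : X.ncard ≤ k) :
    (Sum.inl ⁻¹' X).ncard + {v | ¬ H.Dominates (Sum.inl ⁻¹' X) v}.ncard ≤
      (Set.range Sum.inr ∆ reach (domArcs H k) X).ncard := by
  set R := reach (domArcs H k) X
  choose f hf using exists_inr_notMem hX
  have hinl : (Sum.inl ⁻¹' X).ncard ≤ (R \ Set.range Sum.inr).ncard :=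
    Set.ncard_le_ncard_of_injOn Sum.inl
      (fun u hu => ⟨inl_mem_reach_domArcs_iff.mpr hu, fun ⟨_, h⟩ => Sum.inr_ne_inl h⟩)
      Sum.inl_injective.injOn
  have hinr : {v | ¬ H.Dominates (Sum.inl ⁻¹' X) v}.ncard ≤ (Set.range Sum.inr \ R).ncard :=
    Set.ncard_le_ncard_of_injOn (fun v => Sum.inr (v, f v))
      (fun v hv => ⟨⟨_, rfl⟩, fun h => (inr_mem_reach_domArcs_iff.mp h).elim (hf v) hv⟩)
      (fun v _ w _ h => congrArg Prod.fst (Sum.inr_injective h))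
  rw [Set.symmDiff_def, Set.ncard_union_eq disjoint_sdiff_sdiff]
  omega

end DomArcs

/-- Correctness of the Dominating Set reduction. -/
theorem dominating_set_reduction_correct {V : Type*} [Fintype V]
    (H : SimpleGraph V) (k : ℕ) :
    (∃ D : Finset V, D.card ≤ k ∧
        ∀ v : V, v ∈ D ∨ ∃ d ∈ D, H.Adj d v) ↔
    (∃ X : Set (V ⊕ V × Fin (k + 1)),
      X.ncard ≤ k ∧
      ((Set.range Sum.inr \ reach (domArcs H k) X) ∪
        (reach (domArcs H k) X \ Set.range Sum.inr)).ncard ≤ k) := by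
  classical
  constructor
  · rintro ⟨D, hcard, hD⟩
    have hinl : (Sum.inl '' (D : Set V) : Set (V ⊕ V × Fin (k + 1))).ncard = D.card := by
      rw [Set.ncard_image_of_injective _ Sum.inl_injective, Set.ncard_coe_finset]
    refine ⟨Sum.inl '' (D : Set V), hinl.trans_le hcard, ?_⟩
    rwa [← Set.symmDiff_def, symmDiff_reach_domArcs_image_inl hD, hinl]
  · rintro ⟨X, hX, hcost⟩
    set D := Sum.inl ⁻¹' X ∪ {v | ¬ H.Dominates (Sum.inl ⁻¹' X) v}
    have hD : ∀ v, v ∈ D.toFinset ∨ ∃ d ∈ D.toFinset, H.Adj d v := fun v => by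
      simp only [Set.mem_toFinset]
      exact H.dominates_union_undominated _ v
    refine ⟨D.toFinset, ?_, hD⟩
    calc D.toFinset.card = D.ncard := (Set.ncard_eq_toFinset_card' D).symm
      _ ≤ _ := Set.ncard_union_le _ _
      _ ≤ _ := ncard_add_ncard_undominated_le hX
      _ ≤ k := hcost
end

section
/- Correctness of the Set Cover reduction: Let U be a finite set, let S_1, …, S_m ⊆ U be sets with ⋃_{j=1}^m S_j = U (every element lies in at least one set), and let h ≤ m. Construct the finite directed graph G whose node set is the disjoint union {1,…,m} ⊔ U and which has an arc from j to u if and only if u ∈ S_j. Then there exists J ⊆ {1,…,m} with |J| = h and ⋃_{j ∈ J} S_j = U if and only if there exists a set X of nodes of G with |X| ≤ h such that the number of nodes of G not in reach(X) is at most m − h. (This is the Influence Maximization case A = all nodes, where the cost equals the number of unreached nodes.) -/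
/-- The arc set of the directed graph constructed in the Set Cover reduction:
the node of set `j` points to the node of element `u` iff `u ∈ S j`. -/
def scArcs {U : Type*} {m : ℕ} (S : Fin m → Set U) :
    Set ((Fin m ⊕ U) × (Fin m ⊕ U)) :=
  {a | ∃ (j : Fin m) (u : U), u ∈ S j ∧ a = (Sum.inl j, Sum.inr u)}

theorem Set.ncard_preimage_inl_add_ncard_preimage_inr {α β : Type*} {Y : Set (α ⊕ β)}
    (hY : Y.Finite) : (Sum.inl ⁻¹' Y).ncard + (Sum.inr ⁻¹' Y).ncard = Y.ncard := by
  have hdisj : Disjoint (Sum.inl '' (Sum.inl ⁻¹' Y)) (Sum.inr '' (Sum.inr ⁻¹' Y)) :=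
    Set.isCompl_range_inl_range_inr.disjoint.mono
      (Set.image_subset_range _ _) (Set.image_subset_range _ _)
  rw [← Set.ncard_image_of_injective (Sum.inl ⁻¹' Y) Sum.inl_injective,
    ← Set.ncard_image_of_injective (Sum.inr ⁻¹' Y) Sum.inr_injective,
    ← Set.ncard_union_eq hdisj (hY.subset (Set.image_preimage_subset _ _))
      (hY.subset (Set.image_preimage_subset _ _)),
    Set.image_preimage_eq_inter_range, Set.image_preimage_eq_inter_range,
    ← Set.inter_union_distrib_left, Set.range_inl_union_range_inr, Set.inter_univ]

theorem reach_eq_union_of_no_two_step_path {V : Type*} {S : Set (V × V)}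
    (hS : ∀ a b c, (a, b) ∈ S → (b, c) ∉ S) (X : Set V) :
    reach S X = X ∪ {v | ∃ x ∈ X, (x, v) ∈ S} := by
  ext v
  constructor
  · rintro ⟨x, hx, hxv⟩
    induction hxv with
    | refl => exact Or.inl hx
    | tail _ hbc ih =>
      rcases ih with hb | ⟨a, -, hab⟩
      · exact Or.inr ⟨_, hb, hbc⟩
      · exact absurd hbc (hS _ _ _ hab)
  · rintro (hv | ⟨x, hx, hxv⟩)
    · exact ⟨v, hv, .refl⟩
    · exact ⟨x, hx, .single hxv⟩

section SetCover

variable {U : Type*} {m : ℕ} (S : Fin m → Set U) (X : Set (Fin m ⊕ U))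

theorem mem_scArcs_iff {a b : Fin m ⊕ U} :
    (a, b) ∈ scArcs S ↔ ∃ j u, u ∈ S j ∧ a = .inl j ∧ b = .inr u := by
  simp [scArcs]

theorem scArcs_no_two_step_path (a b c : Fin m ⊕ U) :
    (a, b) ∈ scArcs S → (b, c) ∉ scArcs S := by
  rintro ⟨j, u, -, hab⟩ ⟨j', u', -, hbc⟩
  simp_all

theorem reach_scArcs :
    reach (scArcs S) X = X ∪ {v | ∃ j u, Sum.inl j ∈ X ∧ u ∈ S j ∧ v = .inr u} := by
  rw [reach_eq_union_of_no_two_step_path (scArcs_no_two_step_path S)]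
  ext v
  simp [mem_scArcs_iff]

theorem preimage_inl_reach_scArcs :
    Sum.inl ⁻¹' reach (scArcs S) X = Sum.inl ⁻¹' X := by
  ext j; simp [reach_scArcs]

theorem preimage_inr_reach_scArcs :
    Sum.inr ⁻¹' reach (scArcs S) X = Sum.inr ⁻¹' X ∪ ⋃ j ∈ Sum.inl ⁻¹' X, S j := by
  ext u; simp [reach_scArcs]

theorem ncard_compl_reach_scArcs [Finite U] :
    ((reach (scArcs S) X)ᶜ).ncard =
      (m - (Sum.inl ⁻¹' X).ncard) + (Sum.inr ⁻¹' (reach (scArcs S) X)ᶜ).ncard := by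
  rw [← Set.ncard_preimage_inl_add_ncard_preimage_inr (Set.toFinite _), Set.preimage_compl,
    preimage_inl_reach_scArcs, Set.ncard_compl, Nat.card_fin]

theorem ncard_compl_reach_scArcs_image_inl [Finite U] {J : Finset (Fin m)}
    (hJ : ∀ u, ∃ j ∈ J, u ∈ S j) :
    ((reach (scArcs S) (Sum.inl '' J))ᶜ).ncard = m - J.card := by
  have hreached : Sum.inr ⁻¹' (reach (scArcs S) (Sum.inl '' J))ᶜ = ∅ := by
    rw [Set.preimage_compl, preimage_inr_reach_scArcs, Set.compl_empty_iff,
      Set.preimage_image_eq _ Sum.inl_injective, Set.eq_univ_iff_forall]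
    intro u
    obtain ⟨j, hj, hu⟩ := hJ u
    exact Or.inr (Set.mem_biUnion hj hu)
  rw [ncard_compl_reach_scArcs, hreached, Set.preimage_image_eq _ Sum.inl_injective,
    Set.ncard_empty, Set.ncard_coe_finset, add_zero]

theorem exists_cover_of_ncard_compl_reach_scArcs_le [Finite U] {h : ℕ} (hhm : h ≤ m)
    (hX : X.ncard ≤ h) (hreach : ((reach (scArcs S) X)ᶜ).ncard ≤ m - h) :
    ∃ J : Finset (Fin m), J.card = h ∧ ∀ u : U, ∃ j ∈ J, u ∈ S j := by
  have hsplit := Set.ncard_preimage_inl_add_ncard_preimage_inr (Set.toFinite X)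
  have hinl_le : (Sum.inl ⁻¹' X).ncard ≤ m := by
    simpa using Set.ncard_le_card (Sum.inl ⁻¹' X)
  rw [ncard_compl_reach_scArcs] at hreach
  have hinl : (Sum.inl ⁻¹' X).ncard = h := by omega
  have hinr : Sum.inr ⁻¹' X = ∅ := (Set.ncard_eq_zero (Set.toFinite _)).mp (by omega)
  have hreached : Sum.inr ⁻¹' (reach (scArcs S) X)ᶜ = ∅ :=
    (Set.ncard_eq_zero (Set.toFinite _)).mp (by omega)
  refine ⟨(Set.toFinite (Sum.inl ⁻¹' X)).toFinset, by rwa [← Set.ncard_eq_toFinset_card],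
    fun u => ?_⟩
  have hu : u ∈ Sum.inr ⁻¹' reach (scArcs S) X := by
    simpa using Set.eq_empty_iff_forall_notMem.mp hreached u
  rw [preimage_inr_reach_scArcs, hinr, Set.empty_union, Set.mem_iUnion₂] at hu
  obtain ⟨j, hj, hu⟩ := hu
  exact ⟨j, by simpa using hj, hu⟩

end SetCover

theorem set_cover_reduction_correct_general {U : Type*} [Fintype U]
    (m h : ℕ) (hhm : h ≤ m) (S : Fin m → Set U) :
    (∃ J : Finset (Fin m), J.card = h ∧ ∀ u : U, ∃ j ∈ J, u ∈ S j) ↔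
    (∃ X : Set (Fin m ⊕ U),
      X.ncard ≤ h ∧ ((reach (scArcs S) X)ᶜ).ncard ≤ m - h) := by
  constructor
  · rintro ⟨J, rfl, hJ⟩
    refine ⟨Sum.inl '' J, ?_, (ncard_compl_reach_scArcs_image_inl S hJ).le⟩
    rw [Set.ncard_image_of_injective _ Sum.inl_injective, Set.ncard_coe_finset]
  · rintro ⟨X, hX, hreach⟩
    exact exists_cover_of_ncard_compl_reach_scArcs_le S X hhm hX hreach

/-- Correctness of the Set Cover reduction (Influence Maximization
with `A` = all nodes: the cost of `X` is the number of nodes not reached by `X`). -/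
theorem set_cover_reduction_correct {U : Type*} [Fintype U]
    (m h : ℕ) (hhm : h ≤ m) (S : Fin m → Set U)
    (hcov : ∀ u : U, ∃ j : Fin m, u ∈ S j) :
    (∃ J : Finset (Fin m), J.card = h ∧ ∀ u : U, ∃ j ∈ J, u ∈ S j) ↔
    (∃ X : Set (Fin m ⊕ U),
      X.ncard ≤ h ∧ ((reach (scArcs S) X)ᶜ).ncard ≤ m - h) :=
  set_cover_reduction_correct_general m h hhm S
end

section
/- Correctness of the Independent Set reduction: Let H = (V, E) be a finite simple undirected graph and let k ≤ |V|. Construct the finite directed graph G whose node set is the disjoint union V ⊔ E and which has an arc from v ∈ V to e ∈ E if and only if v is an endpoint of e. Then H has an independent set of size at least k (a set I ⊆ V with no edge having both endpoints in I) if and only if there exists a set X of nodes of G with |X| ≤ |V| − k such that the number of nodes of G not in reach(X) is at most k. (This is the Influence Maximization case A = all nodes, where the cost equals the number of unreached nodes.) -/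
/-- The arc set of the directed graph constructed in the Independent Set reduction:
a vertex node `v` points to an edge node `e` iff `v` is an endpoint of `e`. -/
def isArcs {V : Type*} (H : SimpleGraph V) :
    Set ((V ⊕ ↥H.edgeSet) × (V ⊕ ↥H.edgeSet)) :=
  {a | ∃ (v : V) (e : H.edgeSet),
        v ∈ (e : Sym2 V) ∧ a = (Sum.inl v, Sum.inr e)}

/-
In the constructed digraph every arc goes from a vertex node to an edge node, so `reach X`
consists of `X` and the edges with an endpoint in `X`. If `I` is independent with `|I| = k`,
taking `X` to be the vertex nodes outside `I` reaches every edge node, leaving exactly the `k`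
nodes of `I` unreached. Conversely, the vertex nodes outside `X` are never reached; since there
are at least `k` of them and at most `k` unreached nodes, `X` consists of vertex nodes only and
no edge can join two vertices outside `X`, for its edge node would be one more unreached node.
-/

open Set Sum

theorem Set.ncard_eq_ncard_preimage_inl_add_ncard_preimage_inr {α β : Type*}
    {s : Set (α ⊕ β)} (hs : s.Finite) :
    s.ncard = (inl ⁻¹' s).ncard + (inr ⁻¹' s).ncard := by
  conv_lhs => rw [← image_preimage_inl_union_image_preimage_inr s]
  rw [ncard_union_eq disjoint_image_inl_image_inr
      ((hs.preimage inl_injective.injOn).image _) ((hs.preimage inr_injective.injOn).image _),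
    ncard_image_of_injective _ inl_injective, ncard_image_of_injective _ inr_injective]

theorem mem_reach_iff_of_not_comp {α : Type*} {S : Set (α × α)}
    (hS : ∀ a b c, (a, b) ∈ S → (b, c) ∉ S) {X : Set α} {z : α} :
    z ∈ reach S X ↔ z ∈ X ∨ ∃ x ∈ X, (x, z) ∈ S := by
  constructor
  · rintro ⟨x, hx, hxz⟩
    have : x = z ∨ (x, z) ∈ S := by
      induction hxz with
      | refl => exact .inl rfl
      | tail _ hbc ih =>
        rcases ih with rfl | hab
        · exact .inr hbc
        · exact absurd hbc (hS _ _ _ hab)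
    rcases this with rfl | hxz
    · exact .inl hx
    · exact .inr ⟨x, hx, hxz⟩
  · rintro (hz | ⟨x, hx, hxz⟩)
    · exact ⟨z, hz, .refl⟩
    · exact ⟨x, hx, .single hxz⟩

section IsArcs

variable {V : Type*} {H : SimpleGraph V} {X : Set (V ⊕ H.edgeSet)}

theorem isArcs_not_comp (a b c : V ⊕ H.edgeSet) (hab : (a, b) ∈ isArcs H) :
    (b, c) ∉ isArcs H := by
  obtain ⟨_, _, _, hab⟩ := hab
  rintro ⟨_, _, _, hbc⟩
  simp only [Prod.ext_iff] at hab hbc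
  exact inr_ne_inl (hab.2.symm.trans hbc.1)

theorem inl_mem_reach_isArcs {v : V} : inl v ∈ reach (isArcs H) X ↔ inl v ∈ X := by
  rw [mem_reach_iff_of_not_comp isArcs_not_comp]
  simp [isArcs]

theorem inr_mem_reach_isArcs {e : H.edgeSet} :
    inr e ∈ reach (isArcs H) X ↔ inr e ∈ X ∨ ∃ v ∈ (e : Sym2 V), inl v ∈ X := by
  rw [mem_reach_iff_of_not_comp isArcs_not_comp]
  simp [isArcs, and_comm]

theorem compl_reach_isArcs_image_compl {I : Set V} (hI : ∀ u ∈ I, ∀ v ∈ I, ¬ H.Adj u v) :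
    (reach (isArcs H) (inl '' Iᶜ))ᶜ = inl '' I := by
  ext (v | ⟨e, he⟩)
  · simp [inl_mem_reach_isArcs]
  · induction e using Sym2.ind with
    | _ u v =>
      simpa [inr_mem_reach_isArcs, or_and_right, exists_or] using
        fun hu hv => hI u hu v hv (H.mem_edgeSet.1 he)

theorem image_inl_compl_preimage_subset_compl_reach :
    inl '' (inl ⁻¹' X)ᶜ ⊆ (reach (isArcs H) X)ᶜ := by
  rintro _ ⟨v, hv, rfl⟩
  exact mt inl_mem_reach_isArcs.1 hv

variable [Finite V]

theorem ncard_compl_preimage_inl_le_ncard_compl_reach :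
    (inl ⁻¹' X)ᶜ.ncard ≤ (reach (isArcs H) X)ᶜ.ncard := by
  rw [← ncard_image_of_injective _ inl_injective]
  exact ncard_le_ncard image_inl_compl_preimage_subset_compl_reach

theorem ncard_compl_preimage_inl_lt_ncard_compl_reach {u v : V} (h : H.Adj u v)
    (hu : inl u ∉ X) (hv : inl v ∉ X) (he : inr ⟨s(u, v), H.mem_edgeSet.2 h⟩ ∉ X) :
    (inl ⁻¹' X)ᶜ.ncard < (reach (isArcs H) X)ᶜ.ncard := by
  rw [← ncard_image_of_injective _ inl_injective, Nat.lt_iff_add_one_le,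
    ← ncard_insert_of_notMem (a := (inr ⟨s(u, v), H.mem_edgeSet.2 h⟩ : V ⊕ H.edgeSet)) (by simp)]
  refine ncard_le_ncard (insert_subset ?_ image_inl_compl_preimage_subset_compl_reach)
  simp [inr_mem_reach_isArcs, he, hu, hv]

end IsArcs

/-- Correctness of the Independent Set reduction (Influence
Maximization with `A` = all nodes: the cost of `X` is the number of unreached
nodes). -/
theorem independent_set_reduction_correct {V : Type*} [Fintype V]
    (H : SimpleGraph V) (k : ℕ) (hk : k ≤ Fintype.card V) :
    (∃ I : Finset V, k ≤ I.card ∧ ∀ u ∈ I, ∀ v ∈ I, ¬ H.Adj u v) ↔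
    (∃ X : Set (V ⊕ ↥H.edgeSet),
      X.ncard ≤ Fintype.card V - k ∧
      ((reach (isArcs H) X)ᶜ).ncard ≤ k) := by
  classical
  constructor
  · rintro ⟨I, hkI, hI⟩
    obtain ⟨J, hJI, rfl⟩ := Finset.exists_subset_card_eq hkI
    refine ⟨inl '' (↑J)ᶜ, ?_, ?_⟩
    · rw [ncard_image_of_injective _ inl_injective, ncard_compl, ncard_coe_finset,
        Nat.card_eq_fintype_card]
    · rw [compl_reach_isArcs_image_compl (fun u hu v hv => hI u (hJI hu) v (hJI hv)),
        ncard_image_of_injective _ inl_injective, ncard_coe_finset]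
  · rintro ⟨X, hX, hreach⟩
    have hsplit := ncard_eq_ncard_preimage_inl_add_ncard_preimage_inr X.toFinite
    have hcompl := ncard_add_ncard_compl (inl ⁻¹' X)
    have hle := ncard_compl_preimage_inl_le_ncard_compl_reach.trans hreach
    rw [Nat.card_eq_fintype_card] at hcompl
    have hX_edges : inr ⁻¹' X = ∅ := by
      rw [← ncard_eq_zero]
      omega
    refine ⟨(inl ⁻¹' X)ᶜ.toFinset, ?_, fun u hu v hv huv => ?_⟩
    · rw [← ncard_eq_toFinset_card']
      omega
    · simp only [mem_toFinset, mem_compl_iff, mem_preimage] at hu hv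
      have he : inr ⟨s(u, v), H.mem_edgeSet.2 huv⟩ ∉ X :=
        eq_empty_iff_forall_notMem.1 hX_edges _
      have hlt := ncard_compl_preimage_inl_lt_ncard_compl_reach huv hu hv he
      omega
end
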